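/- Let $n \ge 2$, $\theta \in (0, \pi/2)$, and let $\lambda_1 \ge \dots \ge \lambda_{n-1} > 0 > \lambda_n$ satisfy $\sum_{i=1}^n \arctan \lambda_i \ge (n-2)\frac{\pi}{2} + \theta$ and $\lambda_n > -\cot\theta$. Set $\hat\lambda_n = \tan(\arctan \lambda_n - \theta)$. Then $\sum_{i=1}^{n-1} \frac{1}{\lambda_i} + \frac{1}{\hat\lambda_n} \le 0$. -/

import Mathlib

/-!
Write `γ = θ - arctan λₙ`; the two bounds on `λₙ` give `0 < γ < π/2`. For the positive
eigenvalues `arctan λᵢ⁻¹ = π/2 - arctan λᵢ`, so the phase condition becomes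
`∑_{i<n} arctan λᵢ⁻¹ ≤ π/2 - γ = arctan (tan γ)⁻¹`. Since `arctan` is subadditive on `[0, ∞)`,
this gives `∑_{i<n} λᵢ⁻¹ ≤ (tan γ)⁻¹ = -(tan (arctan λₙ - θ))⁻¹`.
-/

open Real Finset

namespace Real

theorem arctan_add_le_add_arctan {a b : ℝ} (ha : 0 ≤ a) (hb : 0 ≤ b) :
    arctan (a + b) ≤ arctan a + arctan b := by
  by_cases hab : a * b < 1
  · rw [arctan_add hab]
    apply arctan_strictMono.monotone
    rw [le_div_iff₀ (by linarith)]
    nlinarith [mul_nonneg (mul_nonneg ha hb) (add_nonneg ha hb)]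
  · -- here `b⁻¹ ≤ a`, so `arctan a + arctan b ≥ arctan b⁻¹ + arctan b = π/2`
    push Not at hab
    have hb0 : 0 < b := by nlinarith
    have hinv : b⁻¹ ≤ a := by rw [inv_le_iff_one_le_mul₀ hb0]; linarith [mul_comm a b]
    have := arctan_strictMono.monotone hinv
    rw [arctan_inv_of_pos hb0] at this
    linarith [arctan_lt_pi_div_two (a + b)]

theorem arctan_sum_le_sum_arctan {ι : Type*} (s : Finset ι) {f : ι → ℝ}
    (hf : ∀ i ∈ s, 0 ≤ f i) : arctan (∑ i ∈ s, f i) ≤ ∑ i ∈ s, arctan (f i) := by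
  classical
  induction s using Finset.induction with
  | empty => simp
  | insert a t ha ih =>
    rw [sum_insert ha, sum_insert ha]
    have ht : ∀ i ∈ t, 0 ≤ f i := fun i hi => hf i (mem_insert_of_mem hi)
    calc arctan (f a + ∑ i ∈ t, f i)
        ≤ arctan (f a) + arctan (∑ i ∈ t, f i) :=
          arctan_add_le_add_arctan (hf a (mem_insert_self a t)) (sum_nonneg ht)
      _ ≤ arctan (f a) + ∑ i ∈ t, arctan (f i) := by linarith [ih ht]

theorem sum_le_of_sum_arctan_le_arctan {ι : Type*} {s : Finset ι} {f : ι → ℝ} {y : ℝ}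
    (hf : ∀ i ∈ s, 0 ≤ f i) (h : ∑ i ∈ s, arctan (f i) ≤ arctan y) : ∑ i ∈ s, f i ≤ y :=
  arctan_strictMono.le_iff_le.mp ((arctan_sum_le_sum_arctan s hf).trans h)

theorem arctan_inv_tan {γ : ℝ} (h₀ : 0 < γ) (h₁ : γ < π / 2) :
    arctan (tan γ)⁻¹ = π / 2 - γ := by
  rw [arctan_inv_of_pos (tan_pos_of_pos_of_lt_pi_div_two h₀ h₁),
    arctan_tan (by linarith) h₁]

end Real

theorem Fin.pos_of_val_ne_pred_of_antitone {n : ℕ} {f : Fin n → ℝ} (hf : Antitone f)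
    {h : n - 2 < n} (hpos : 0 < f ⟨n - 2, h⟩) {i : Fin n} (hi : (i : ℕ) ≠ n - 1) : 0 < f i :=
  hpos.trans_le <| hf <| Fin.le_iff_val_le_val.mpr <| by
    change i.val ≤ n - 2
    omega

theorem stmt_14 (n : ℕ) (hn : 2 ≤ n) (θ : ℝ) (hθ : θ ∈ Set.Ioo 0 (Real.pi / 2))
    (lam : Fin n → ℝ)
    (hmono : ∀ i j : Fin n, i ≤ j → lam j ≤ lam i)
    (hpos : 0 < lam ⟨n - 2, by omega⟩)
    (hneg : lam ⟨n - 1, by omega⟩ < 0)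
    (hphase : (n - 2 : ℝ) * (Real.pi / 2) + θ ≤ ∑ i, Real.arctan (lam i))
    (hlow : -(Real.tan θ)⁻¹ < lam ⟨n - 1, by omega⟩) :
    (∑ i ∈ Finset.univ.erase ⟨n - 1, by omega⟩, (lam i)⁻¹) +
      (Real.tan (Real.arctan (lam ⟨n - 1, by omega⟩) - θ))⁻¹ ≤ 0 := by
  set m : Fin n := ⟨n - 1, by omega⟩
  set γ := θ - arctan (lam m)
  have hγ₀ : 0 < γ := by linarith [hθ.1, arctan_lt_zero.mpr hneg]
  have hγ₁ : γ < π / 2 := by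
    have := arctan_strictMono hlow
    rw [arctan_neg, arctan_inv_tan hθ.1 hθ.2] at this
    linarith
  have hlam : ∀ i ∈ univ.erase m, 0 < lam i := fun i hi =>
    Fin.pos_of_val_ne_pred_of_antitone hmono hpos (Fin.val_ne_of_ne (ne_of_mem_erase hi))
  have hcard : ((univ.erase m).card : ℝ) = n - 1 := by
    rw [card_erase_of_mem (mem_univ m), card_univ, Fintype.card_fin, Nat.cast_sub (by omega)]
    norm_num
  have hphase' : ∑ i ∈ univ.erase m, arctan (lam i)⁻¹ ≤ arctan (tan γ)⁻¹ := by
    rw [sum_congr rfl fun i hi => arctan_inv_of_pos (hlam i hi), sum_sub_distrib, sum_const,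
      nsmul_eq_mul, hcard, sum_erase_eq_sub (mem_univ m), arctan_inv_tan hγ₀ hγ₁]
    linarith
  have hsum := sum_le_of_sum_arctan_le_arctan (fun i hi => (inv_pos.mpr (hlam i hi)).le) hphase'
  rw [show arctan (lam m) - θ = -γ by ring, tan_neg, inv_neg]
  linarith
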